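/- Let F : ℝⁿ → ℝ be differentiable with η-Lipschitz gradient, bounded below, 0 < γ < 2, and x_{n+1} = x_n − (γ/η)∇F(x_n). Then min_{0 ≤ n ≤ N−1} ‖∇F(x_n)‖² ≤ (2η/(γ(2 − γ)N))(F(x₀) − inf F); i.e., the smallest gradient norm among the first N iterates is O(1/√N). -/

import Mathlib

/-!
Lipschitz continuity of the gradient gives the quadratic upper bound
`F (x + v) ≤ F x + ⟪∇F x, v⟫ + η/2 ‖v‖²`. Applied to the step `v = -(γ/η) ∇F(xₙ)` it shows that
each iteration decreases `F` by at least `γ(2-γ)/(2η) ‖∇F(xₙ)‖²`. Telescoping, the first `N`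
squared gradient norms sum to at most `(F x₀ - inf F) · 2η/(γ(2-γ))`, and the smallest of them is
at most their average.
-/

open Finset InnerProductSpace

section Descent

variable {E : Type*} [NormedAddCommGroup E] [InnerProductSpace ℝ E] [CompleteSpace E]
  {F : E → ℝ} {F' : E → E} {η : ℝ}

theorem le_add_inner_add_sq_of_lipschitz_gradient (hF : ∀ x, HasGradientAt F (F' x) x)
    (hlip : ∀ x y, ‖F' x - F' y‖ ≤ η * ‖x - y‖) (x v : E) :
    F (x + v) ≤ F x + ⟪F' x, v⟫_ℝ + η / 2 * ‖v‖ ^ 2 := by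
  set φ : ℝ → ℝ := fun t => F (x + t • v) - t * ⟪F' x, v⟫_ℝ - η * t ^ 2 / 2 * ‖v‖ ^ 2
  have hφ : ∀ t, HasDerivAt φ (⟪F' (x + t • v) - F' x, v⟫_ℝ - η * t * ‖v‖ ^ 2) t := by
    intro t
    have hline : HasDerivAt (fun t : ℝ => x + t • v) v t := by
      simpa using ((hasDerivAt_id t).smul_const v).const_add x
    have hFline : HasDerivAt (fun t : ℝ => F (x + t • v)) ⟪F' (x + t • v), v⟫_ℝ t :=
      ((hF (x + t • v)).hasFDerivAt.comp_hasDerivAt t hline :)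
    have hquad := (((hasDerivAt_pow 2 t).const_mul η).div_const 2).mul_const (‖v‖ ^ 2)
    refine ((hFline.sub ((hasDerivAt_id t).mul_const ⟪F' x, v⟫_ℝ)).sub hquad).congr_deriv ?_
    rw [inner_sub_left]
    push_cast
    ring
  -- `φ' t ≤ 0` on `[0, 1]` because `⟪F'(x + t v) - F' x, v⟫ ≤ η t ‖v‖²`.
  have hanti : AntitoneOn φ (Set.Icc 0 1) := by
    refine antitoneOn_of_hasDerivWithinAt_nonpos (convex_Icc 0 1)
      (fun t _ => (hφ t).continuousAt.continuousWithinAt)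
      (fun t _ => (hφ t).hasDerivWithinAt) fun t ht => ?_
    rw [interior_Icc] at ht
    have hgrad : ‖F' (x + t • v) - F' x‖ ≤ η * (t * ‖v‖) := by
      simpa [norm_smul, abs_of_pos ht.1] using hlip (x + t • v) x
    have hcs := real_inner_le_norm (F' (x + t • v) - F' x) v
    nlinarith [mul_le_mul_of_nonneg_right hgrad (norm_nonneg v)]
  have h10 := hanti (by norm_num) (by norm_num) zero_le_one
  simp only [φ, one_smul, zero_smul, add_zero] at h10
  linarith

theorem le_sub_mul_norm_sq_of_lipschitz_gradient (hF : ∀ x, HasGradientAt F (F' x) x)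
    (hlip : ∀ x y, ‖F' x - F' y‖ ≤ η * ‖x - y‖) (x : E) (s : ℝ) :
    F (x - s • F' x) ≤ F x - s * (1 - η * s / 2) * ‖F' x‖ ^ 2 := by
  have h := le_add_inner_add_sq_of_lipschitz_gradient hF hlip x (-(s • F' x))
  rw [← sub_eq_add_neg, inner_neg_right, real_inner_smul_right, real_inner_self_eq_norm_sq,
    norm_neg, norm_smul, mul_pow, Real.norm_eq_abs, sq_abs] at h
  linarith

end Descent

theorem sum_range_le_sub_of_le_sub {u a : ℕ → ℝ} (h : ∀ n, u n ≤ a n - a (n + 1)) (N : ℕ) :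
    ∑ n ∈ range N, u n ≤ a 0 - a N :=
  (sum_le_sum fun n _ => h n).trans_eq (sum_range_sub' a N)

theorem exists_lt_le_div_of_sum_range_le {u : ℕ → ℝ} {S : ℝ} {N : ℕ} (hN : 0 < N)
    (h : ∑ n ∈ range N, u n ≤ S) : ∃ n < N, u n ≤ S / N := by
  have hsum : ∑ n ∈ range N, u n ≤ ∑ _n ∈ range N, S / N := by
    rw [sum_const, card_range, nsmul_eq_mul, mul_div_cancel₀ S (by positivity)]
    exact h
  obtain ⟨n, hn, hle⟩ := exists_le_of_sum_le (nonempty_range_iff.mpr hN.ne') hsum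
  exact ⟨n, mem_range.mp hn, hle⟩

theorem stmt_14 {d : ℕ} (η γ : ℝ) (hη : 0 < η) (hγ0 : 0 < γ) (hγ2 : γ < 2)
    (F : EuclideanSpace ℝ (Fin d) → ℝ)
    (F' : EuclideanSpace ℝ (Fin d) → EuclideanSpace ℝ (Fin d))
    (hdiff : ∀ x, HasGradientAt F (F' x) x)
    (hlip : ∀ x y, ‖F' x - F' y‖ ≤ η * ‖x - y‖)
    (hbdd : BddBelow (Set.range F))
    (x : ℕ → EuclideanSpace ℝ (Fin d))
    (hx : ∀ n, x (n+1) = x n - (γ/η) • F' (x n)) :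
    ∀ N : ℕ, 0 < N → ∃ n < N,
      ‖F' (x n)‖^2 ≤ (2*η/(γ*(2-γ)*N)) * (F (x 0) - ⨅ y, F y) := by
  intro N hN
  have hc : γ / η * (1 - η * (γ / η) / 2) = γ * (2 - γ) / (2 * η) := by field_simp
  set c := γ * (2 - γ) / (2 * η)
  have h2γ : 0 < 2 - γ := by linarith
  have hcpos : 0 < c := by positivity
  have hstep : ∀ n, ‖F' (x n)‖ ^ 2 * c ≤ F (x n) - F (x (n + 1)) := fun n => by
    have := le_sub_mul_norm_sq_of_lipschitz_gradient hdiff hlip (x n) (γ / η)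
    rw [← hx, hc] at this
    linarith
  have hsum : ∑ n ∈ range N, ‖F' (x n)‖ ^ 2 ≤ (F (x 0) - ⨅ y, F y) / c := by
    rw [le_div_iff₀ hcpos, sum_mul]
    calc ∑ n ∈ range N, ‖F' (x n)‖ ^ 2 * c ≤ F (x 0) - F (x N) :=
          sum_range_le_sub_of_le_sub (a := fun n => F (x n)) hstep N
      _ ≤ F (x 0) - ⨅ y, F y := by linarith [ciInf_le hbdd (x N)]
  obtain ⟨n, hn, hle⟩ := exists_lt_le_div_of_sum_range_le hN hsum
  refine ⟨n, hn, hle.trans_eq ?_⟩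
  simp only [c]
  field_simp
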